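/- arXiv:1008.1289 — 10 statements merged into one kernel-verified Lean document; each statement's English description precedes it below -/
import Mathlib

section
/- For every controlled solution (x, p) = ((q1, q2, z), p) with z(0) ∈ [0, m2], one has q1(t) ≤ max(q1(0), λ1/θ1) and q2(t) ≤ max(q2(0), λ2/θ2) for all t ≥ 0. -/
/-!
The server-pool component `z` is a relaxation towards `m2` or `0`, so `[0, m2]` is invariant;
on it the service term `z μ12 + (m2 - z) μ22` is nonnegative. Dropping the nonpositive
service terms leaves `qᵢ' ≤ λᵢ - θᵢ qᵢ`, and any level `M ≥ λᵢ / θᵢ` is an upper barrier for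
such a differential inequality: where `qᵢ ≥ M`, the derivative is `≤ 0`.
-/

open Set

theorem nonneg_of_hasDerivAt_of_nonpos_imp {f f' : ℝ → ℝ} {a : ℝ}
    (hf : ∀ t, a ≤ t → HasDerivAt f (f' t) t)
    (hf' : ∀ t, a ≤ t → f t ≤ 0 → 0 ≤ f' t) (ha : 0 ≤ f a) :
    ∀ t, a ≤ t → 0 ≤ f t := by
  intro t hat
  by_contra! hft
  -- `s`, the last time in `[a, t]` at which `f ≥ 0`; on `(s, t]` we have `f < 0`, so `f` increases.
  set S := Icc a t ∩ f ⁻¹' Ici 0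
  have hS : IsClosed S :=
    ContinuousOn.preimage_isClosed_of_isClosed
      (fun u hu => (hf u hu.1).continuousAt.continuousWithinAt) isClosed_Icc isClosed_Ici
  have hbdd : BddAbove S := ⟨t, fun u hu => hu.1.2⟩
  obtain ⟨⟨has, hs_le⟩, hs_mem⟩ : sSup S ∈ S := hS.csSup_mem ⟨a, left_mem_Icc.2 hat, ha⟩ hbdd
  set s := sSup S
  have hfs : 0 ≤ f s := hs_mem
  have hneg : ∀ u ∈ Ioc s t, f u < 0 := fun u hu => by
    by_contra! h
    exact hu.1.not_ge (le_csSup hbdd ⟨⟨has.trans hu.1.le, hu.2⟩, h⟩)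
  have hst : s < t := hs_le.lt_of_ne fun h => hft.not_ge (h ▸ hfs)
  have hmono : MonotoneOn f (Icc s t) := by
    refine monotoneOn_of_hasDerivWithinAt_nonneg (f' := f') (convex_Icc s t)
      (fun u hu => (hf u (has.trans hu.1)).continuousAt.continuousWithinAt)
      ?_ ?_ <;> rw [interior_Icc] <;> intro u hu
    · exact (hf u (has.trans hu.1.le)).hasDerivWithinAt
    · exact hf' u (has.trans hu.1.le) (hneg u ⟨hu.1, hu.2.le⟩).le
  linarith [hmono (left_mem_Icc.2 hst.le) (right_mem_Icc.2 hst.le) hst.le]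

theorem le_of_hasDerivAt_of_le_imp {f f' : ℝ → ℝ} {a M : ℝ}
    (hf : ∀ t, a ≤ t → HasDerivAt f (f' t) t)
    (hf' : ∀ t, a ≤ t → M ≤ f t → f' t ≤ 0) (ha : f a ≤ M) :
    ∀ t, a ≤ t → f t ≤ M := by
  have key := nonneg_of_hasDerivAt_of_nonpos_imp (f := fun t => M - f t) (f' := fun t => -f' t)
    (fun t ht => (hf t ht).const_sub M)
    (fun t ht h => neg_nonneg.2 (hf' t ht (by linarith))) (by linarith)
  exact fun t ht => by linarith [key t ht]

theorem le_max_of_hasDerivAt_le_sub_mul {f f' : ℝ → ℝ} {a lam th : ℝ} (hth : 0 < th)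
    (hf : ∀ t, a ≤ t → HasDerivAt f (f' t) t)
    (hf' : ∀ t, a ≤ t → f' t ≤ lam - th * f t) :
    ∀ t, a ≤ t → f t ≤ max (f a) (lam / th) := by
  refine le_of_hasDerivAt_of_le_imp hf (fun t ht hMf => ?_) (le_max_left _ _)
  have hlam : lam ≤ th * max (f a) (lam / th) :=
    (div_le_iff₀' hth).1 (le_max_right _ _)
  linarith [hf' t ht, mul_le_mul_of_nonneg_left hMf hth.le]

theorem mem_Icc_of_hasDerivAt_relaxation {z p : ℝ → ℝ} {m mu mu' : ℝ}
    (hmu : 0 ≤ mu) (hmu' : 0 ≤ mu')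
    (hp : ∀ t, 0 ≤ t → 0 ≤ p t ∧ p t ≤ 1)
    (hz : ∀ t, 0 ≤ t → HasDerivAt z (p t * mu * (m - z t) - (1 - p t) * mu' * z t) t)
    (hz0 : z 0 ∈ Icc 0 m) :
    ∀ t, 0 ≤ t → z t ∈ Icc 0 m := by
  have hlow := nonneg_of_hasDerivAt_of_nonpos_imp hz (fun t ht hzt => by
    obtain ⟨hp0, hp1⟩ := hp t ht
    have : 0 ≤ p t * mu * (m - z t) :=
      mul_nonneg (mul_nonneg hp0 hmu) (by linarith [hz0.1.trans hz0.2])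
    linarith [mul_nonneg (mul_nonneg (sub_nonneg.2 hp1) hmu') (neg_nonneg.2 hzt)]) hz0.1
  have hup := le_of_hasDerivAt_of_le_imp hz (fun t ht hzt => by
    obtain ⟨hp0, hp1⟩ := hp t ht
    have : 0 ≤ (1 - p t) * mu' * z t :=
      mul_nonneg (mul_nonneg (sub_nonneg.2 hp1) hmu') (hlow t ht)
    linarith [mul_nonneg (mul_nonneg hp0 hmu) (sub_nonneg.2 hzt)]) hz0.2
  exact fun t ht => ⟨hlow t ht, hup t ht⟩

theorem stmt_1_general (lam1 lam2 m1 m2 mu11 mu12 mu22 th1 th2 : ℝ)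
    (hm1 : 0 < m1)
    (hmu11 : 0 < mu11) (hmu12 : 0 < mu12) (hmu22 : 0 < mu22)
    (hth1 : 0 < th1) (hth2 : 0 < th2)
    (q1 q2 z p : ℝ → ℝ)
    (hp : ∀ t, 0 ≤ t → 0 ≤ p t ∧ p t ≤ 1)
    (hq1' : ∀ t, 0 ≤ t →
      HasDerivAt q1 (lam1 - m1*mu11 - p t*(z t*mu12 + (m2 - z t)*mu22) - th1*q1 t) t)
    (hq2' : ∀ t, 0 ≤ t →
      HasDerivAt q2 (lam2 - (1 - p t)*(z t*mu12 + (m2 - z t)*mu22) - th2*q2 t) t)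
    (hz' : ∀ t, 0 ≤ t →
      HasDerivAt z (p t*mu22*(m2 - z t) - (1 - p t)*mu12*z t) t)
    (hz0 : 0 ≤ z 0 ∧ z 0 ≤ m2) :
    ∀ t, 0 ≤ t →
      q1 t ≤ max (q1 0) (lam1/th1) ∧ q2 t ≤ max (q2 0) (lam2/th2) := by
  have hz := mem_Icc_of_hasDerivAt_relaxation hmu22.le hmu12.le hp hz' hz0
  have hservice : ∀ t, 0 ≤ t → 0 ≤ z t * mu12 + (m2 - z t) * mu22 := fun t ht =>
    add_nonneg (mul_nonneg (hz t ht).1 hmu12.le) (mul_nonneg (sub_nonneg.2 (hz t ht).2) hmu22.le)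
  have hm1mu11 : 0 ≤ m1 * mu11 := by positivity
  intro t ht
  constructor
  · refine le_max_of_hasDerivAt_le_sub_mul hth1 hq1' (fun u hu => ?_) t ht
    linarith [mul_nonneg (hp u hu).1 (hservice u hu)]
  · refine le_max_of_hasDerivAt_le_sub_mul hth2 hq2' (fun u hu => ?_) t ht
    linarith [mul_nonneg (sub_nonneg.2 (hp u hu).2) (hservice u hu)]

/-- For every controlled solution of the fluid ODE with `z 0 ∈ [0, m2]`,
the queue components satisfy `q1 t ≤ max (q1 0) (lam1/th1)` and
`q2 t ≤ max (q2 0) (lam2/th2)` for all `t ≥ 0`. -/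
theorem stmt_1 (lam1 lam2 m1 m2 mu11 mu12 mu22 th1 th2 r kap : ℝ)
    (hlam1 : 0 < lam1) (hlam2 : 0 < lam2) (hm1 : 0 < m1) (hm2 : 0 < m2)
    (hmu11 : 0 < mu11) (hmu12 : 0 < mu12) (hmu22 : 0 < mu22)
    (hth1 : 0 < th1) (hth2 : 0 < th2) (hr : 0 < r) (hkap : 0 ≤ kap)
    (q1 q2 z p : ℝ → ℝ)
    (hp : ∀ t, 0 ≤ t → 0 ≤ p t ∧ p t ≤ 1)
    (hq1' : ∀ t, 0 ≤ t →
      HasDerivAt q1 (lam1 - m1*mu11 - p t*(z t*mu12 + (m2 - z t)*mu22) - th1*q1 t) t)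
    (hq2' : ∀ t, 0 ≤ t →
      HasDerivAt q2 (lam2 - (1 - p t)*(z t*mu12 + (m2 - z t)*mu22) - th2*q2 t) t)
    (hz' : ∀ t, 0 ≤ t →
      HasDerivAt z (p t*mu22*(m2 - z t) - (1 - p t)*mu12*z t) t)
    (hz0 : 0 ≤ z 0 ∧ z 0 ≤ m2) :
    ∀ t, 0 ≤ t →
      q1 t ≤ max (q1 0) (lam1/th1) ∧ q2 t ≤ max (q2 0) (lam2/th2) :=
  stmt_1_general lam1 lam2 m1 m2 mu11 mu12 mu22 th1 th2 hm1 hmu11 hmu12 hmu22 hth1 hth2 q1 q2 z p hp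
    hq1' hq2' hz' hz0
end

section
/- Suppose λ1 ≥ m1·μ11 and Assumption A(I) holds. Then z̄ ≥ m2 − λ2/μ22. -/
/-- Under `lam1 ≥ m1·mu11` and Assumption A(I), `z̄ ≥ m2 − lam2/mu22`. -/
theorem stmt_3 (lam1 lam2 m1 m2 mu11 mu12 mu22 th1 th2 r kap : ℝ)
    (hlam1 : 0 < lam1) (hlam2 : 0 < lam2) (hm1 : 0 < m1) (hm2 : 0 < m2)
    (hmu11 : 0 < mu11) (hmu12 : 0 < mu12) (hmu22 : 0 < mu22)
    (hth1 : 0 < th1) (hth2 : 0 < th2) (hr : 0 < r) (hkap : 0 ≤ kap)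
    (zb q1a s2a : ℝ)
    (hzb : zb = (th2*(lam1 - m1*mu11) - r*th1*(lam2 - m2*mu22) - th1*th2*kap)/(r*th1*mu22 + th2*mu12))
    (hq1a : q1a = max (lam1 - mu11*m1) 0 / th1)
    (hs2a : s2a = max (m2 - lam2/mu22) 0)
    (hover : m1*mu11 ≤ lam1)
    (hAI : th1*(q1a - kap) ≥ mu12*s2a) :
    zb ≥ m2 - lam2/mu22 := by
  have hmax : max (lam1 - mu11*m1) 0 = lam1 - mu11*m1 := by
    apply max_eq_left; nlinarith
  have hq1a' : th1 * q1a = lam1 - mu11*m1 := by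
    rw [hq1a, hmax]; field_simp
  have hs2 : s2a ≥ m2 - lam2/mu22 := by rw [hs2a]; exact le_max_left _ _
  have key : lam1 - mu11*m1 - th1*kap ≥ mu12*(m2 - lam2/mu22) := by
    have := mul_le_mul_of_nonneg_left hs2 hmu12.le
    nlinarith [hAI]
  have hD : 0 < r*th1*mu22 + th2*mu12 := by positivity
  rw [hzb, ge_iff_le, le_div_iff₀ hD]
  have hc : lam2/mu22 * mu22 = lam2 := div_mul_cancel₀ _ hmu22.ne'
  nlinarith [mul_le_mul_of_nonneg_left key hth2.le, mul_pos hr hth1,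
    mul_pos (mul_pos hr hth1) hmu22]
end

section
/- There is at most one quadruple (q1, q2, z, p) ∈ ℝ × ℝ × [0, m2] × ℝ such that Ψ_p(q1, q2, z) = (0, 0, 0), p = 1 whenever q1 − r·q2 > κ, and p = 0 whenever q1 − r·q2 < κ. Moreover, any such quadruple equals (q1*, q2*, z*, π*). -/
set_option maxHeartbeats 1000000 in
/-- Uniqueness of the stationary quadruple: any `(q1, q2, z, p)` with `z ∈ [0, m2]`,
`Ψ_p(q1,q2,z) = 0`, `p = 1` whenever `q1 − r·q2 > κ` and `p = 0` whenever
`q1 − r·q2 < κ`, equals the starred point `(q1*, q2*, z*, π*)`. -/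
theorem stmt_4 (lam1 lam2 m1 m2 mu11 mu12 mu22 th1 th2 r kap : ℝ)
    (hlam1 : 0 < lam1) (hlam2 : 0 < lam2) (hm1 : 0 < m1) (hm2 : 0 < m2)
    (hmu11 : 0 < mu11) (hmu12 : 0 < mu12) (hmu22 : 0 < mu22)
    (hth1 : 0 < th1) (hth2 : 0 < th2) (hr : 0 < r) (hkap : 0 ≤ kap)
    (zb zs q1s q2s pis : ℝ)
    (hzb : zb = (th2*(lam1 - m1*mu11) - r*th1*(lam2 - m2*mu22) - th1*th2*kap)/(r*th1*mu22 + th2*mu12))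
    (hzs : zs = min (max zb 0) m2)
    (hq1s : q1s = (lam1 - m1*mu11 - mu12*zs)/th1)
    (hq2s : q2s = (lam2 - mu22*(m2 - zs))/th2)
    (hpis : pis = mu12*zs/(mu12*zs + mu22*(m2 - zs))) :
    ∀ q1 q2 z p : ℝ, 0 ≤ z → z ≤ m2 →
      lam1 - m1*mu11 - p*(z*mu12 + (m2 - z)*mu22) - th1*q1 = 0 →
      lam2 - (1 - p)*(z*mu12 + (m2 - z)*mu22) - th2*q2 = 0 →
      p*mu22*(m2 - z) - (1 - p)*mu12*z = 0 →
      (q1 - r*q2 > kap → p = 1) →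
      (q1 - r*q2 < kap → p = 0) →
      q1 = q1s ∧ q2 = q2s ∧ z = zs ∧ p = pis := by
  intro q1 q2 z p hz0 hzm h1 h2 h3 hp1 hp0
  have hS : 0 < z*mu12 + (m2 - z)*mu22 := by
    rcases lt_or_eq_of_le hzm with h | h
    · have h5 := mul_pos (by linarith : (0:ℝ) < m2 - z) hmu22
      nlinarith [mul_nonneg hz0 hmu12.le]
    · nlinarith [mul_pos hm2 hmu12]
  have hD : 0 < r*th1*mu22 + th2*mu12 := by positivity
  have hpS : p*(z*mu12 + (m2 - z)*mu22) = mu12*z := by linear_combination h3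
  have e1 : th1*q1 = lam1 - m1*mu11 - mu12*z := by linear_combination -h1 - hpS
  have e2 : th2*q2 = lam2 - mu22*(m2 - z) := by linear_combination -h2 + hpS
  have e3 : zb*(r*th1*mu22 + th2*mu12)
      = th2*(lam1 - m1*mu11) - r*th1*(lam2 - m2*mu22) - th1*th2*kap := by
    rw [hzb, div_mul_cancel₀ _ (ne_of_gt hD)]
  have hE : (q1 - r*q2 - kap) * (th1*th2) = (zb - z) * (r*th1*mu22 + th2*mu12) := by
    linear_combination th2*e1 - r*th1*e2 - e3
  have hzz : z = zs := by
    rcases lt_trichotomy z zb with hlt | heq | hgt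
    · have hgtk : q1 - r*q2 > kap := by
        nlinarith [mul_pos hth1 hth2, mul_pos (sub_pos.2 hlt) hD]
      have hp := hp1 hgtk
      rw [hp] at hpS
      have h4 : (m2 - z) * mu22 = 0 := by linear_combination hpS
      have hzm2 : z = m2 := by
        rcases mul_eq_zero.1 h4 with h | h
        · linarith
        · exact absurd h hmu22.ne'
      have hm2zb : m2 ≤ zb := by rw [← hzm2]; exact hlt.le
      rw [hzs, hzm2, max_eq_left (by linarith : (0:ℝ) ≤ zb), min_eq_right hm2zb]
    · rw [hzs, ← heq, max_eq_left hz0, min_eq_left hzm]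
    · have hltk : q1 - r*q2 < kap := by
        nlinarith [mul_pos hth1 hth2, mul_pos (sub_pos.2 hgt) hD]
      have hp := hp0 hltk
      rw [hp] at hpS
      have h4 : mu12 * z = 0 := by linear_combination -hpS
      have hz : z = 0 := by
        rcases mul_eq_zero.1 h4 with h | h
        · exact absurd h hmu12.ne'
        · exact h
      rw [hz] at hgt
      rw [hzs, hz, max_eq_right hgt.le, min_eq_left (le_of_lt hm2)]
  refine ⟨?_, ?_, hzz, ?_⟩
  · rw [hq1s, ← hzz, eq_div_iff hth1.ne']; linear_combination e1
  · rw [hq2s, ← hzz, eq_div_iff hth2.ne']; linear_combination e2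
  · rw [hpis, ← hzz]
    have hne : mu12*z + mu22*(m2 - z) ≠ 0 := by
      have h5 : mu12*z + mu22*(m2 - z) = z*mu12 + (m2 - z)*mu22 := by ring
      rw [h5]; exact hS.ne'
    rw [eq_div_iff hne]; linear_combination hpS
end

section
/- Suppose λ1 ≥ m1·μ11 and Assumption A(I) holds. Then z* ∈ [0, m2], π* ∈ [0, 1], q1* ≥ κ, q2* ≥ 0, Ψ_{π*}(q1*, q2*, z*) = (0, 0, 0); furthermore, if q1* − r·q2* > κ then π* = 1, and if q1* − r·q2* < κ then π* = 0. -/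
set_option maxHeartbeats 2000000


/-- Existence/consistency of the stationary point: under `lam1 ≥ m1·mu11` and
Assumption A(I), the starred point satisfies `z* ∈ [0, m2]`, `π* ∈ [0, 1]`,
`q1* ≥ κ`, `q2* ≥ 0`, `Ψ_{π*}(q1*, q2*, z*) = 0`, plus the threshold consistency
conditions on `π*`. -/
theorem stmt_5 (lam1 lam2 m1 m2 mu11 mu12 mu22 th1 th2 r kap : ℝ)
    (hlam1 : 0 < lam1) (hlam2 : 0 < lam2) (hm1 : 0 < m1) (hm2 : 0 < m2)
    (hmu11 : 0 < mu11) (hmu12 : 0 < mu12) (hmu22 : 0 < mu22)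
    (hth1 : 0 < th1) (hth2 : 0 < th2) (hr : 0 < r) (hkap : 0 ≤ kap)
    (zb zs q1s q2s pis q1a q2a s2a : ℝ)
    (hzb : zb = (th2*(lam1 - m1*mu11) - r*th1*(lam2 - m2*mu22) - th1*th2*kap)/(r*th1*mu22 + th2*mu12))
    (hzs : zs = min (max zb 0) m2)
    (hq1s : q1s = (lam1 - m1*mu11 - mu12*zs)/th1)
    (hq2s : q2s = (lam2 - mu22*(m2 - zs))/th2)
    (hpis : pis = mu12*zs/(mu12*zs + mu22*(m2 - zs)))
    (hq1a : q1a = max (lam1 - mu11*m1) 0 / th1)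
    (hq2a : q2a = max (lam2 - mu22*m2) 0 / th2)
    (hs2a : s2a = max (m2 - lam2/mu22) 0)
    (hover : m1*mu11 ≤ lam1)
    (hAI : th1*(q1a - kap) ≥ mu12*s2a) :
    (0 ≤ zs ∧ zs ≤ m2) ∧ (0 ≤ pis ∧ pis ≤ 1) ∧ kap ≤ q1s ∧ 0 ≤ q2s ∧
    lam1 - m1*mu11 - pis*(zs*mu12 + (m2 - zs)*mu22) - th1*q1s = 0 ∧
    lam2 - (1 - pis)*(zs*mu12 + (m2 - zs)*mu22) - th2*q2s = 0 ∧
    pis*mu22*(m2 - zs) - (1 - pis)*mu12*zs = 0 ∧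
    (q1s - r*q2s > kap → pis = 1) ∧
    (q1s - r*q2s < kap → pis = 0) := by
  have hC : 0 < r*th1*mu22 + th2*mu12 := by positivity
  have hz0 : 0 ≤ zs := by rw [hzs]; exact le_min (le_max_right zb 0) hm2.le
  have hzm : zs ≤ m2 := by rw [hzs]; exact min_le_right _ _
  have hs2a0 : 0 ≤ s2a := by rw [hs2a]; exact le_max_right _ _
  -- Assumption A(I) in explicit form
  have hB : mu12*s2a ≤ lam1 - m1*mu11 - th1*kap := by
    have hmax : max (lam1 - mu11*m1) 0 = lam1 - mu11*m1 := max_eq_left (by linarith)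
    rw [hq1a, hmax] at hAI
    have he : th1*((lam1 - mu11*m1)/th1 - kap) = lam1 - mu11*m1 - th1*kap := by
      field_simp
    nlinarith [hAI]
  have hzbC : zb*(r*th1*mu22 + th2*mu12)
      = th2*(lam1 - m1*mu11) - r*th1*(lam2 - m2*mu22) - th1*th2*kap := by
    rw [hzb]; field_simp
  -- key bound: mu12*zs ≤ lam1 - m1*mu11 - th1*kap
  have hq1 : mu12*zs ≤ lam1 - m1*mu11 - th1*kap := by
    rcases le_or_gt zb 0 with h | h
    · have hz : zs = 0 := by rw [hzs, max_eq_right h, min_eq_left hm2.le]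
      rw [hz]
      nlinarith [mul_nonneg hmu12.le hs2a0]
    · have hle : zs ≤ zb := by
        rw [hzs]; exact le_trans (min_le_left _ _) (le_of_eq (max_eq_left h.le))
      have hs2ub : m2*mu22 - lam2 ≤ mu22*s2a := by
        have h1 : m2 - lam2/mu22 ≤ s2a := by rw [hs2a]; exact le_max_left _ _
        have h2 : mu22*(m2 - lam2/mu22) = m2*mu22 - lam2 := by field_simp
        nlinarith
      have key : mu12*zb*(r*th1*mu22 + th2*mu12)
          ≤ (lam1 - m1*mu11 - th1*kap)*(r*th1*mu22 + th2*mu12) := by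
        have h1 := mul_le_mul_of_nonneg_left hs2ub (by positivity : (0:ℝ) ≤ mu12*r*th1)
        have h2 := mul_le_mul_of_nonneg_left hB (by positivity : (0:ℝ) ≤ r*th1*mu22)
        have hm : mu12*(zb*(r*th1*mu22 + th2*mu12))
            = mu12*(th2*(lam1 - m1*mu11) - r*th1*(lam2 - m2*mu22) - th1*th2*kap) := by
          rw [hzbC]
        linarith [h1, h2, hm]
      have hzbB : mu12*zb ≤ lam1 - m1*mu11 - th1*kap :=
        le_of_mul_le_mul_right key hC
      linarith [mul_le_mul_of_nonneg_left hle hmu12.le, hzbB]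
  -- key bound: mu22*(m2 - zs) ≤ lam2
  have hq2 : mu22*(m2 - zs) ≤ lam2 := by
    rcases le_or_gt (m2 - lam2/mu22) 0 with h | h
    · have h2 : mu22*m2 ≤ lam2 := by
        have : mu22*(m2 - lam2/mu22) ≤ 0 := by nlinarith
        have h3 : mu22*(m2 - lam2/mu22) = m2*mu22 - lam2 := by field_simp
        nlinarith
      nlinarith [mul_nonneg hmu22.le hz0]
    · have hs2 : s2a = m2 - lam2/mu22 := by rw [hs2a]; exact max_eq_left h.le
      have h3 : mu22*s2a = m2*mu22 - lam2 := by rw [hs2]; field_simp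
      have hzbge : s2a ≤ zb := by
        have h1 := mul_le_mul_of_nonneg_left hB (by positivity : (0:ℝ) ≤ th2)
        have h4 : r*th1*(mu22*s2a) = r*th1*(m2*mu22 - lam2) := by rw [h3]
        have hsC : s2a*(r*th1*mu22 + th2*mu12) ≤ zb*(r*th1*mu22 + th2*mu12) := by
          nlinarith [hzbC, h1, h4]
        exact le_of_mul_le_mul_right hsC hC
      have hsm : s2a ≤ m2 := by
        have : 0 < lam2/mu22 := by positivity
        rw [hs2]; linarith
      have hsz : s2a ≤ zs := by
        rw [hzs]
        exact le_min (le_trans hzbge (le_max_left _ _)) hsm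
      nlinarith [mul_le_mul_of_nonneg_left hsz hmu22.le]
  -- denominator positive
  have hD : 0 < mu12*zs + mu22*(m2 - zs) := by
    rcases hz0.lt_or_eq with h | h
    · nlinarith [mul_pos hmu12 h, mul_nonneg hmu22.le (by linarith : (0:ℝ) ≤ m2 - zs)]
    · rw [← h]; nlinarith [mul_pos hmu22 hm2]
  have hpi0 : 0 ≤ pis := by
    rw [hpis]; exact div_nonneg (mul_nonneg hmu12.le hz0) hD.le
  have hpi1 : pis ≤ 1 := by
    rw [hpis, div_le_one hD]
    nlinarith [mul_nonneg hmu22.le (by linarith : (0:ℝ) ≤ m2 - zs)]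
  have hq1e : th1*q1s = lam1 - m1*mu11 - mu12*zs := by rw [hq1s]; field_simp
  have hq2e : th2*q2s = lam2 - mu22*(m2 - zs) := by rw [hq2s]; field_simp
  have hq1k : kap ≤ q1s := by nlinarith [hq1e, hq1]
  have hq20 : 0 ≤ q2s := by nlinarith [hq2e, hq2]
  have hpie : pis*(mu12*zs + mu22*(m2 - zs)) = mu12*zs := by
    rw [hpis]; field_simp
  have eq1 : lam1 - m1*mu11 - pis*(zs*mu12 + (m2 - zs)*mu22) - th1*q1s = 0 := by
    have : pis*(zs*mu12 + (m2 - zs)*mu22) = mu12*zs := by rw [← hpie]; ring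
    linarith [hq1e, this]
  have eq2 : lam2 - (1 - pis)*(zs*mu12 + (m2 - zs)*mu22) - th2*q2s = 0 := by
    have : (1 - pis)*(zs*mu12 + (m2 - zs)*mu22) = mu22*(m2 - zs) := by
      nlinarith [hpie]
    linarith [hq2e, this]
  have eq3 : pis*mu22*(m2 - zs) - (1 - pis)*mu12*zs = 0 := by
    rw [hpis]; field_simp; ring
  have hkey : th1*th2*(q1s - r*q2s - kap) = (zb - zs)*(r*th1*mu22 + th2*mu12) := by
    linear_combination th2*hq1e - r*th1*hq2e - hzbC
  refine ⟨⟨hz0, hzm⟩, ⟨hpi0, hpi1⟩, hq1k, hq20, eq1, eq2, eq3, ?_, ?_⟩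
  · intro h
    have hpos : 0 < (zb - zs)*(r*th1*mu22 + th2*mu12) := by
      rw [← hkey]
      have : 0 < q1s - r*q2s - kap := by linarith
      positivity
    have hzz : zs < zb := by nlinarith [hpos, hC]
    have hzs2 : zs = m2 := by
      rcases le_or_gt (max zb 0) m2 with hc | hc
      · exfalso
        have : zs = max zb 0 := by rw [hzs, min_eq_left hc]
        have := le_max_left zb 0
        linarith
      · rw [hzs, min_eq_right hc.le]
    have hden : mu12*m2 + mu22*(m2 - m2) = mu12*m2 := by ring
    rw [hpis, hzs2, hden]
    exact div_self (by positivity)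
  · intro h
    have hneg : (zb - zs)*(r*th1*mu22 + th2*mu12) < 0 := by
      rw [← hkey]
      nlinarith [mul_pos hth1 hth2]
    have hzz : zb < zs := by nlinarith [hneg, hC]
    have h2 : zs ≤ max zb 0 := by rw [hzs]; exact min_le_left _ _
    have hzs0 : zs = 0 := by
      rcases max_cases zb 0 with ⟨he, _⟩ | ⟨he, _⟩
      · rw [he] at h2; linarith
      · rw [he] at h2; linarith
    rw [hpis, hzs0]
    simp
end

section
/- Let (a1, a2, b) be a balance triple. Then for all real numbers C and p and every (q1, q2, z) ∈ ℝ³, C·(Ψ_p)₁(q1,q2,z) + (Ψ_p)₂(q1,q2,z) + (C − 1)·(Ψ_p)₃(q1,q2,z) = −C·θ1·(q1 − a1) − θ2·(q2 − a2) − (C·μ12 − μ22)·(z − b), where (Ψ_p)ᵢ denotes the i-th component of Ψ_p. In particular, this linear combination does not depend on p. -/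
/-- For a balance triple `(a1, a2, b)`, the Lyapunov combination
`C·Ψ₁ + Ψ₂ + (C−1)·Ψ₃` equals
`−C·θ1(q1 − a1) − θ2(q2 − a2) − (C·μ12 − μ22)(z − b)`, independently of `p`. -/
theorem stmt_12 (lam1 lam2 m1 m2 mu11 mu12 mu22 th1 th2 r kap : ℝ)
    (hlam1 : 0 < lam1) (hlam2 : 0 < lam2) (hm1 : 0 < m1) (hm2 : 0 < m2)
    (hmu11 : 0 < mu11) (hmu12 : 0 < mu12) (hmu22 : 0 < mu22)
    (hth1 : 0 < th1) (hth2 : 0 < th2) (hr : 0 < r) (hkap : 0 ≤ kap)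
    (Psi1 Psi2 Psi3 : ℝ → ℝ → ℝ → ℝ → ℝ)
    (hPsi1 : ∀ p q1 q2 z, Psi1 p q1 q2 z =
      lam1 - m1*mu11 - p*(z*mu12 + (m2 - z)*mu22) - th1*q1)
    (hPsi2 : ∀ p q1 q2 z, Psi2 p q1 q2 z =
      lam2 - (1 - p)*(z*mu12 + (m2 - z)*mu22) - th2*q2)
    (hPsi3 : ∀ p q1 q2 z, Psi3 p q1 q2 z =
      p*mu22*(m2 - z) - (1 - p)*mu12*z)
    (a1 a2 b : ℝ)
    (hbal1 : th1*a1 = lam1 - m1*mu11 - mu12*b)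
    (hbal2 : th2*a2 = lam2 - mu22*(m2 - b)) :
    ∀ (C p q1 q2 z : ℝ),
      C*Psi1 p q1 q2 z + Psi2 p q1 q2 z + (C - 1)*Psi3 p q1 q2 z =
        -(C*th1)*(q1 - a1) - th2*(q2 - a2) - (C*mu12 - mu22)*(z - b) := by
  intro C p q1 q2 z
  rw [hPsi1, hPsi2, hPsi3]
  linear_combination (-C)*hbal1 - hbal2
end

section
/- Suppose μ12 ≥ μ22, let (a1, a2, b) be a balance triple, and set β = min(θ1, θ2). Let (x, p) = ((q1, q2, z), p) be a controlled solution such that q1(t) ≥ a1, q2(t) ≥ a2 and z(t) ≥ b for all t ≥ 0. Then for all t ≥ 0, (q1(t) − a1) + (q2(t) − a2) ≤ ((q1(0) − a1) + (q2(0) − a2))·exp(−β·t). -/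
/-!
Let `V = (q₁ - a₁) + (q₂ - a₂)`. Both queues are fed by the same total service
`z μ₁₂ + (m₂ - z) μ₂₂`, whichever way the control `p` splits it, so `p` drops out of `V'`;
eliminating the arrival rates with the balance equations gives
`V' = -θ₁ (q₁ - a₁) - θ₂ (q₂ - a₂) - (μ₁₂ - μ₂₂)(z - b) ≤ -β V`,
and Grönwall's inequality yields the exponential decay.
-/

open Real Set

theorem le_mul_exp_neg_of_hasDerivAt_le_neg_mul {f f' : ℝ → ℝ} {β : ℝ}
    (hf : ∀ t, 0 ≤ t → HasDerivAt f (f' t) t) (hf' : ∀ t, 0 ≤ t → f' t ≤ -β * f t)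
    {t : ℝ} (ht : 0 ≤ t) : f t ≤ f 0 * exp (-β * t) := by
  have hcont : ContinuousOn f (Icc 0 t) := fun s hs =>
    (hf s hs.1).continuousAt.continuousWithinAt
  have key := le_gronwallBound_of_liminf_deriv_right_le (K := -β) (ε := 0) hcont
    (fun s hs _ hr => (hf s hs.1).hasDerivWithinAt.liminf_right_slope_le hr) le_rfl
    (fun s hs => by simpa using hf' s hs.1) t ⟨ht, le_rfl⟩
  simpa [gronwallBound_ε0] using key

section BalanceDrift

variable {lam1 lam2 m1 m2 mu11 mu12 mu22 th1 th2 a1 a2 b : ℝ}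

theorem deviation_drift_eq (hbal1 : th1 * a1 = lam1 - m1 * mu11 - mu12 * b)
    (hbal2 : th2 * a2 = lam2 - mu22 * (m2 - b)) (p q1 q2 z : ℝ) :
    (lam1 - m1 * mu11 - p * (z * mu12 + (m2 - z) * mu22) - th1 * q1)
      + (lam2 - (1 - p) * (z * mu12 + (m2 - z) * mu22) - th2 * q2)
      = -th1 * (q1 - a1) - th2 * (q2 - a2) - (mu12 - mu22) * (z - b) := by
  linear_combination -hbal1 - hbal2

theorem deviation_drift_le (hmu : mu22 ≤ mu12)
    (hbal1 : th1 * a1 = lam1 - m1 * mu11 - mu12 * b)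
    (hbal2 : th2 * a2 = lam2 - mu22 * (m2 - b)) {p q1 q2 z : ℝ}
    (hq1 : a1 ≤ q1) (hq2 : a2 ≤ q2) (hz : b ≤ z) :
    (lam1 - m1 * mu11 - p * (z * mu12 + (m2 - z) * mu22) - th1 * q1)
      + (lam2 - (1 - p) * (z * mu12 + (m2 - z) * mu22) - th2 * q2)
      ≤ -min th1 th2 * ((q1 - a1) + (q2 - a2)) := by
  rw [deviation_drift_eq hbal1 hbal2]
  have h1 : min th1 th2 * (q1 - a1) ≤ th1 * (q1 - a1) :=
    mul_le_mul_of_nonneg_right (min_le_left _ _) (sub_nonneg.2 hq1)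
  have h2 : min th1 th2 * (q2 - a2) ≤ th2 * (q2 - a2) :=
    mul_le_mul_of_nonneg_right (min_le_right _ _) (sub_nonneg.2 hq2)
  have h3 : 0 ≤ (mu12 - mu22) * (z - b) :=
    mul_nonneg (sub_nonneg.2 hmu) (sub_nonneg.2 hz)
  linarith

end BalanceDrift

theorem stmt_14_general (lam1 lam2 m1 m2 mu11 mu12 mu22 th1 th2 : ℝ)
    (hmu : mu22 ≤ mu12)
    (a1 a2 b : ℝ)
    (hbal1 : th1*a1 = lam1 - m1*mu11 - mu12*b)
    (hbal2 : th2*a2 = lam2 - mu22*(m2 - b))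
    (beta : ℝ) (hbeta : beta = min th1 th2)
    (q1 q2 z p : ℝ → ℝ)
    (hq1' : ∀ t, 0 ≤ t →
      HasDerivAt q1 (lam1 - m1*mu11 - p t*(z t*mu12 + (m2 - z t)*mu22) - th1*q1 t) t)
    (hq2' : ∀ t, 0 ≤ t →
      HasDerivAt q2 (lam2 - (1 - p t)*(z t*mu12 + (m2 - z t)*mu22) - th2*q2 t) t)
    (hq1ge : ∀ t, 0 ≤ t → a1 ≤ q1 t)
    (hq2ge : ∀ t, 0 ≤ t → a2 ≤ q2 t)
    (hzge : ∀ t, 0 ≤ t → b ≤ z t) :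
    ∀ t, 0 ≤ t →
      (q1 t - a1) + (q2 t - a2) ≤
        ((q1 0 - a1) + (q2 0 - a2)) * Real.exp (-beta*t) := by
  subst hbeta
  intro t ht
  exact le_mul_exp_neg_of_hasDerivAt_le_neg_mul (f := fun s => (q1 s - a1) + (q2 s - a2))
    (fun s hs => ((hq1' s hs).sub_const a1).add ((hq2' s hs).sub_const a2))
    (fun s hs => deviation_drift_le hmu hbal1 hbal2 (hq1ge s hs) (hq2ge s hs) (hzge s hs)) ht

/-- When `mu12 ≥ mu22`, the sum of queue deviations decays exponentially with
rate `min th1 th2` along a controlled solution staying above a balance triple. -/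
theorem stmt_14 (lam1 lam2 m1 m2 mu11 mu12 mu22 th1 th2 r kap : ℝ)
    (hlam1 : 0 < lam1) (hlam2 : 0 < lam2) (hm1 : 0 < m1) (hm2 : 0 < m2)
    (hmu11 : 0 < mu11) (hmu12 : 0 < mu12) (hmu22 : 0 < mu22)
    (hth1 : 0 < th1) (hth2 : 0 < th2) (hr : 0 < r) (hkap : 0 ≤ kap)
    (hmu : mu22 ≤ mu12)
    (a1 a2 b : ℝ)
    (hbal1 : th1*a1 = lam1 - m1*mu11 - mu12*b)
    (hbal2 : th2*a2 = lam2 - mu22*(m2 - b))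
    (beta : ℝ) (hbeta : beta = min th1 th2)
    (q1 q2 z p : ℝ → ℝ)
    (hp : ∀ t, 0 ≤ t → 0 ≤ p t ∧ p t ≤ 1)
    (hq1' : ∀ t, 0 ≤ t →
      HasDerivAt q1 (lam1 - m1*mu11 - p t*(z t*mu12 + (m2 - z t)*mu22) - th1*q1 t) t)
    (hq2' : ∀ t, 0 ≤ t →
      HasDerivAt q2 (lam2 - (1 - p t)*(z t*mu12 + (m2 - z t)*mu22) - th2*q2 t) t)
    (hz' : ∀ t, 0 ≤ t →
      HasDerivAt z (p t*mu22*(m2 - z t) - (1 - p t)*mu12*z t) t)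
    (hq1ge : ∀ t, 0 ≤ t → a1 ≤ q1 t)
    (hq2ge : ∀ t, 0 ≤ t → a2 ≤ q2 t)
    (hzge : ∀ t, 0 ≤ t → b ≤ z t) :
    ∀ t, 0 ≤ t →
      (q1 t - a1) + (q2 t - a2) ≤
        ((q1 0 - a1) + (q2 0 - a2)) * Real.exp (-beta*t) :=
  stmt_14_general lam1 lam2 m1 m2 mu11 mu12 mu22 th1 th2 hmu a1 a2 b hbal1 hbal2 beta hbeta q1 q2 z
    p hq1' hq2' hq1ge hq2ge hzge
end

section
/- Let ν = min(μ12, μ22), and suppose m1·μ11 < λ1 < ν·m2 + m1·μ11 and λ2 < ν·m2. Let (x, p) = ((q1, q2, z), p) be a controlled solution such that q1(t) ≥ 0 and q2(t) ≥ 0 for all t ≥ 0, with z(0) ∈ [0, m2], q1(0) ≤ (λ1 − m1·μ11)/θ1 and q2(0) ≤ λ2/θ2. Then δ₊(x(t)) < 0 < δ₋(x(t)) for all t ≥ 0. -/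
set_option maxHeartbeats 1000000

open Set in
/-- ε-fencing invariance lemma: if `f 0 ≤ c` and the derivative is strictly
negative whenever `f` sits at `c + ε` for some `ε > 0`, then `f ≤ c` forever. -/
lemma aux_inv {f f' : ℝ → ℝ} {c : ℝ}
    (hf : ∀ s, 0 ≤ s → HasDerivAt f (f' s) s)
    (h0 : f 0 ≤ c)
    (hb : ∀ s, 0 ≤ s → ∀ ε : ℝ, 0 < ε → f s = c + ε → f' s < 0) :
    ∀ t, 0 ≤ t → f t ≤ c := by
  intro t ht
  refine le_of_forall_pos_le_add ?_
  intro ε hε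
  have hcont : ContinuousOn f (Icc 0 t) := fun s hs =>
    ((hf s hs.1).differentiableAt.continuousAt).continuousWithinAt
  have := image_le_of_deriv_right_lt_deriv_boundary (f := f) (f' := f')
    (B := fun _ => c + ε) (B' := fun _ => 0) (a := 0) (b := t)
    hcont
    (fun s hs => (hf s hs.1).hasDerivWithinAt)
    (by simpa using h0.trans (le_add_of_nonneg_right hε.le))
    (fun x => hasDerivAt_const x (c + ε))
    (fun s hs hfs => hb s hs.1 ε hε hfs)
  exact this (Set.mem_Icc.mpr ⟨ht, le_refl t⟩)

/-- Strict negativity of a convex combination of negatives. -/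
lemma aux_convex {p a b : ℝ} (hp0 : 0 ≤ p) (hp1 : p ≤ 1) (ha : a < 0) (hb : b < 0) :
    p * a + (1 - p) * b < 0 := by
  have h1 : p * a ≤ p * max a b :=
    mul_le_mul_of_nonneg_left (le_max_left a b) hp0
  have h2 : (1 - p) * b ≤ (1 - p) * max a b :=
    mul_le_mul_of_nonneg_left (le_max_right a b) (by linarith)
  have h3 : p * max a b + (1 - p) * max a b = max a b := by ring
  have h4 : max a b < 0 := max_lt ha hb
  linarith

/-- Sufficient conditions for global state-space collapse: along a controlled
solution with nonnegative queues starting below the natural bounds, the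
positive-recurrence drift condition holds for all time. -/
theorem stmt_16 (lam1 lam2 m1 m2 mu11 mu12 mu22 th1 th2 r kap j k : ℝ)
    (hlam1 : 0 < lam1) (hlam2 : 0 < lam2) (hm1 : 0 < m1) (hm2 : 0 < m2)
    (hmu11 : 0 < mu11) (hmu12 : 0 < mu12) (hmu22 : 0 < mu22)
    (hth1 : 0 < th1) (hth2 : 0 < th2) (hr : 0 < r) (hkap : 0 ≤ kap)
    (hj : 0 < j) (hk : 0 < k) (hrjk : r = j / k)
    (dp dm : ℝ → ℝ → ℝ → ℝ)
    (hdp : ∀ q1 q2 z, dp q1 q2 z =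
      j*(th2*q2 - lam2) + k*(lam1 - m1*mu11 - z*mu12 - (m2 - z)*mu22 - th1*q1))
    (hdm : ∀ q1 q2 z, dm q1 q2 z =
      j*(z*mu12 + (m2 - z)*mu22 + th2*q2 - lam2) + k*(lam1 - m1*mu11 - th1*q1))
    (nu : ℝ) (hnu : nu = min mu12 mu22)
    (h1 : m1*mu11 < lam1) (h2 : lam1 < nu*m2 + m1*mu11) (h3 : lam2 < nu*m2)
    (q1 q2 z p : ℝ → ℝ)
    (hp : ∀ t, 0 ≤ t → 0 ≤ p t ∧ p t ≤ 1)
    (hq1' : ∀ t, 0 ≤ t →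
      HasDerivAt q1 (lam1 - m1*mu11 - p t*(z t*mu12 + (m2 - z t)*mu22) - th1*q1 t) t)
    (hq2' : ∀ t, 0 ≤ t →
      HasDerivAt q2 (lam2 - (1 - p t)*(z t*mu12 + (m2 - z t)*mu22) - th2*q2 t) t)
    (hz' : ∀ t, 0 ≤ t →
      HasDerivAt z (p t*mu22*(m2 - z t) - (1 - p t)*mu12*z t) t)
    (hq1nn : ∀ t, 0 ≤ t → 0 ≤ q1 t)
    (hq2nn : ∀ t, 0 ≤ t → 0 ≤ q2 t)
    (hz0 : 0 ≤ z 0 ∧ z 0 ≤ m2)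
    (hq10 : q1 0 ≤ (lam1 - m1*mu11)/th1)
    (hq20 : q2 0 ≤ lam2/th2) :
    ∀ t, 0 ≤ t → dp (q1 t) (q2 t) (z t) < 0 ∧ 0 < dm (q1 t) (q2 t) (z t) := by
  have hnu12 : nu ≤ mu12 := hnu ▸ min_le_left _ _
  have hnu22 : nu ≤ mu22 := hnu ▸ min_le_right _ _
  have hnupos : 0 < nu := hnu ▸ lt_min hmu12 hmu22
  -- upper bound on z
  have hzub : ∀ t, 0 ≤ t → z t ≤ m2 := by
    refine aux_inv (f' := fun s => p s*mu22*(m2 - z s) - (1 - p s)*mu12*z s) hz' hz0.2 ?_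
    intro s hs ε hε hzs
    obtain ⟨hp0, hp1⟩ := hp s hs
    show p s*mu22*(m2 - z s) - (1 - p s)*mu12*z s < 0
    have heq : p s*mu22*(m2 - z s) - (1 - p s)*mu12*z s
        = p s * (-(mu22*ε)) + (1 - p s) * (-(mu12*(m2+ε))) := by rw [hzs]; ring
    rw [heq]
    exact aux_convex hp0 hp1 (by nlinarith) (by nlinarith)
  -- lower bound on z
  have hzlb : ∀ t, 0 ≤ t → 0 ≤ z t := by
    have : ∀ t, 0 ≤ t → (fun s => -z s) t ≤ 0 := by
      refine aux_inv (f' := fun s => -(p s*mu22*(m2 - z s) - (1 - p s)*mu12*z s))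
        (fun s hs => (hz' s hs).neg) (by simpa using hz0.1) ?_
      intro s hs ε hε hzs
      simp only [zero_add] at hzs
      have hzs' : z s = -ε := by linarith [neg_eq_iff_eq_neg.mp hzs]
      obtain ⟨hp0, hp1⟩ := hp s hs
      show -(p s*mu22*(m2 - z s) - (1 - p s)*mu12*z s) < 0
      have heq : -(p s*mu22*(m2 - z s) - (1 - p s)*mu12*z s)
          = p s * (-(mu22*(m2+ε))) + (1 - p s) * (-(mu12*ε)) := by rw [hzs']; ring
      rw [heq]
      exact aux_convex hp0 hp1 (by nlinarith) (by nlinarith)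
    intro t ht
    simpa using neg_nonpos.mp (this t ht)
  -- service rate bound
  have hS : ∀ t, 0 ≤ t → nu*m2 ≤ z t*mu12 + (m2 - z t)*mu22 := by
    intro t ht
    have ha : z t * nu ≤ z t * mu12 := mul_le_mul_of_nonneg_left hnu12 (hzlb t ht)
    have hb : (m2 - z t) * nu ≤ (m2 - z t) * mu22 :=
      mul_le_mul_of_nonneg_left hnu22 (sub_nonneg.mpr (hzub t ht))
    have hc : nu*m2 = z t * nu + (m2 - z t) * nu := by ring
    linarith
  have hSnn : ∀ t, 0 ≤ t → 0 ≤ z t*mu12 + (m2 - z t)*mu22 := fun t ht =>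
    le_trans (by positivity) (hS t ht)
  -- upper bound on q1
  have hq1ub : ∀ t, 0 ≤ t → q1 t ≤ (lam1 - m1*mu11)/th1 := by
    refine aux_inv
      (f' := fun s => lam1 - m1*mu11 - p s*(z s*mu12 + (m2 - z s)*mu22) - th1*q1 s)
      hq1' hq10 ?_
    intro s hs ε hε hq
    obtain ⟨hp0, _⟩ := hp s hs
    have hpS : 0 ≤ p s*(z s*mu12 + (m2 - z s)*mu22) := mul_nonneg hp0 (hSnn s hs)
    have hc : th1 * ((lam1 - m1*mu11)/th1) = lam1 - m1*mu11 := by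
      field_simp
    show lam1 - m1*mu11 - p s*(z s*mu12 + (m2 - z s)*mu22) - th1*q1 s < 0
    rw [hq]
    nlinarith
  -- upper bound on q2
  have hq2ub : ∀ t, 0 ≤ t → q2 t ≤ lam2/th2 := by
    refine aux_inv
      (f' := fun s => lam2 - (1 - p s)*(z s*mu12 + (m2 - z s)*mu22) - th2*q2 s)
      hq2' hq20 ?_
    intro s hs ε hε hq
    obtain ⟨_, hp1⟩ := hp s hs
    have hpS : 0 ≤ (1 - p s)*(z s*mu12 + (m2 - z s)*mu22) :=
      mul_nonneg (by linarith) (hSnn s hs)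
    have hc : th2 * (lam2/th2) = lam2 := by field_simp
    show lam2 - (1 - p s)*(z s*mu12 + (m2 - z s)*mu22) - th2*q2 s < 0
    rw [hq]
    nlinarith
  -- conclusion
  intro t ht
  have hS' := hS t ht
  have hq1b := hq1ub t ht
  have hq2b := hq2ub t ht
  have hq1n := hq1nn t ht
  have hq2n := hq2nn t ht
  have hq1b' : th1 * q1 t ≤ lam1 - m1*mu11 := by
    have := mul_le_mul_of_nonneg_left hq1b hth1.le
    rwa [mul_div_cancel₀ _ hth1.ne'] at this
  have hq2b' : th2 * q2 t ≤ lam2 := by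
    have := mul_le_mul_of_nonneg_left hq2b hth2.le
    rwa [mul_div_cancel₀ _ hth2.ne'] at this
  constructor
  · rw [hdp]
    nlinarith [mul_nonneg hth1.le hq1n]
  · rw [hdm]
    nlinarith [mul_nonneg hth2.le hq2n]
end

section
/- Suppose 0 < z̄ < m2 (so z* = z̄). Set ξ = (1 + r)·min(μ22·(m2 − z*), μ12·z*) and ς = θ1 + r·θ2 + max(1, r)·|μ12 − μ22|. If ε ≥ 0 satisfies ε·ς < ξ, then every (q1, q2, z) ∈ ℝ³ with |q1 − q1*| ≤ ε, |q2 − q2*| ≤ ε and |z − z*| ≤ ε satisfies δ₊(q1, q2, z) < 0 < δ₋(q1, q2, z). -/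
/-- An explicit neighborhood of the interior stationary point on which the
positive-recurrence drift condition holds. -/
theorem stmt_17 (lam1 lam2 m1 m2 mu11 mu12 mu22 th1 th2 r kap j k : ℝ)
    (hlam1 : 0 < lam1) (hlam2 : 0 < lam2) (hm1 : 0 < m1) (hm2 : 0 < m2)
    (hmu11 : 0 < mu11) (hmu12 : 0 < mu12) (hmu22 : 0 < mu22)
    (hth1 : 0 < th1) (hth2 : 0 < th2) (hr : 0 < r) (hkap : 0 ≤ kap)
    (hj : 0 < j) (hk : 0 < k) (hrjk : r = j / k)
    (dp dm : ℝ → ℝ → ℝ → ℝ)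
    (hdp : ∀ q1 q2 z, dp q1 q2 z =
      j*(th2*q2 - lam2) + k*(lam1 - m1*mu11 - z*mu12 - (m2 - z)*mu22 - th1*q1))
    (hdm : ∀ q1 q2 z, dm q1 q2 z =
      j*(z*mu12 + (m2 - z)*mu22 + th2*q2 - lam2) + k*(lam1 - m1*mu11 - th1*q1))
    (zb zs q1s q2s : ℝ)
    (hzb : zb = (th2*(lam1 - m1*mu11) - r*th1*(lam2 - m2*mu22) - th1*th2*kap)/(r*th1*mu22 + th2*mu12))
    (hzs : zs = min (max zb 0) m2)
    (hq1s : q1s = (lam1 - m1*mu11 - mu12*zs)/th1)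
    (hq2s : q2s = (lam2 - mu22*(m2 - zs))/th2)
    (hzb0 : 0 < zb) (hzbm2 : zb < m2)
    (xi sig : ℝ)
    (hxi : xi = (1 + r)*min (mu22*(m2 - zs)) (mu12*zs))
    (hsig : sig = th1 + r*th2 + max 1 r * |mu12 - mu22|)
    (eps : ℝ) (heps : 0 ≤ eps) (hepsxi : eps*sig < xi) :
    ∀ q1 q2 z : ℝ,
      |q1 - q1s| ≤ eps → |q2 - q2s| ≤ eps → |z - zs| ≤ eps →
      dp q1 q2 z < 0 ∧ 0 < dm q1 q2 z := by
  intro q1 q2 z hq1 hq2 hz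
  have hjk : j = r * k := by rw [hrjk]; field_simp
  have hth1q1s : th1 * q1s = lam1 - m1*mu11 - mu12*zs := by rw [hq1s]; field_simp
  have hth2q2s : th2 * q2s = lam2 - mu22*(m2 - zs) := by rw [hq2s]; field_simp
  obtain ⟨hd1l, hd1r⟩ := abs_le.mp hq1
  obtain ⟨hd2l, hd2r⟩ := abs_le.mp hq2
  have habs : 0 ≤ |mu12 - mu22| := abs_nonneg _
  have hmaxr : r ≤ max 1 r := le_max_right _ _
  have hmin1 : min (mu22*(m2 - zs)) (mu12*zs) ≤ mu22*(m2 - zs) := min_le_left _ _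
  have hmin2 : min (mu22*(m2 - zs)) (mu12*zs) ≤ mu12*zs := min_le_right _ _
  have hjk' : 0 < j + k := by linarith
  -- base scaled inequality
  have hbase : eps*(k*th1) + eps*(j*th2) + eps*(k*(max 1 r)) * |mu12 - mu22|
      < (j + k) * min (mu22*(m2 - zs)) (mu12*zs) := by
    have h := mul_lt_mul_of_pos_left hepsxi hk
    rw [hxi, hsig] at h
    rw [hjk]
    nlinarith [h]
  have hkeyA : eps*(k*th1) + eps*(j*th2) + eps*(k*(max 1 r)) * |mu12 - mu22|
      < (j + k) * (mu22*(m2 - zs)) :=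
    lt_of_lt_of_le hbase (mul_le_mul_of_nonneg_left hmin1 hjk'.le)
  have hkeyB : eps*(k*th1) + eps*(j*th2) + eps*(k*(max 1 r)) * |mu12 - mu22|
      < (j + k) * (mu12*zs) :=
    lt_of_lt_of_le hbase (mul_le_mul_of_nonneg_left hmin2 hjk'.le)
  -- mixed term bound
  have hzt : |(mu12 - mu22) * (z - zs)| ≤ |mu12 - mu22| * eps := by
    rw [abs_mul]; exact mul_le_mul_of_nonneg_left hz habs
  obtain ⟨hztl, hztr⟩ := abs_le.mp hzt
  have f2 : j*th2*(q2 - q2s) ≤ j*th2*eps :=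
    mul_le_mul_of_nonneg_left hd2r (by positivity)
  have f2' : j*th2*(-eps) ≤ j*th2*(q2 - q2s) :=
    mul_le_mul_of_nonneg_left hd2l (by positivity)
  have f1 : k*th1*(q1 - q1s) ≤ k*th1*eps :=
    mul_le_mul_of_nonneg_left hd1r (by positivity)
  have f1' : k*th1*(-eps) ≤ k*th1*(q1 - q1s) :=
    mul_le_mul_of_nonneg_left hd1l (by positivity)
  have f3 : k*(-(|mu12 - mu22| * eps)) ≤ k*((mu12 - mu22)*(z - zs)) :=
    mul_le_mul_of_nonneg_left hztl hk.le
  have f3' : k*((mu12 - mu22)*(z - zs)) ≤ k*(|mu12 - mu22| * eps) :=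
    mul_le_mul_of_nonneg_left hztr hk.le
  have g3 : j*(-(|mu12 - mu22| * eps)) ≤ j*((mu12 - mu22)*(z - zs)) :=
    mul_le_mul_of_nonneg_left hztl hj.le
  have hjle : j ≤ k * max 1 r := by
    rw [hjk]
    calc r * k = k * r := by ring
    _ ≤ k * max 1 r := mul_le_mul_of_nonneg_left hmaxr hk.le
  have hkle : k ≤ k * max 1 r := by
    calc k = k * 1 := by ring
    _ ≤ k * max 1 r := mul_le_mul_of_nonneg_left (le_max_left _ _) hk.le
  have f4 : k*(|mu12 - mu22| * eps) ≤ (k * max 1 r)*(|mu12 - mu22| * eps) :=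
    mul_le_mul_of_nonneg_right hkle (by positivity)
  have g4 : j*(|mu12 - mu22| * eps) ≤ (k * max 1 r)*(|mu12 - mu22| * eps) :=
    mul_le_mul_of_nonneg_right hjle (by positivity)
  constructor
  · have edp : dp q1 q2 z = -(j + k) * (mu22*(m2 - zs))
        + (j*th2*(q2 - q2s) - k*th1*(q1 - q1s) - k*((mu12 - mu22)*(z - zs))) := by
      rw [hdp]
      linear_combination j * hth2q2s - k * hth1q1s
    rw [edp]
    linarith [f2, f1', f3, f4, hkeyA]
  · have edm : dm q1 q2 z = (j + k) * (mu12*zs)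
        + (j*((mu12 - mu22)*(z - zs)) + j*th2*(q2 - q2s) - k*th1*(q1 - q1s)) := by
      rw [hdm]
      linear_combination j * hth2q2s - k * hth1q1s
    rw [edm]
    linarith [f2', f1, g3, g4, hkeyB]
end

section
/- For every (q1, q2, z) ∈ ℝ³ and every real p, k·((Ψ_p)₁(q1,q2,z) − r·(Ψ_p)₂(q1,q2,z)) = p·δ₊(q1,q2,z) + (1 − p)·δ₋(q1,q2,z), where (Ψ_p)₁ and (Ψ_p)₂ are the first and second components of Ψ_p. Consequently, if δ₊(q1,q2,z) < 0 < δ₋(q1,q2,z), then p := δ₋(q1,q2,z)/(δ₋(q1,q2,z) − δ₊(q1,q2,z)) lies in the open interval (0, 1) and is the unique real number for which (Ψ_p)₁(q1,q2,z) − r·(Ψ_p)₂(q1,q2,z) = 0. -/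
/-- The drift of the weighted queue difference under `Ψ_p` is the convex
combination `p·δ₊ + (1 − p)·δ₋`; when `δ₊ < 0 < δ₋`, the unique `p` making it
vanish is `δ₋/(δ₋ − δ₊)`, which lies in `(0, 1)`. -/
theorem stmt_18 (lam1 lam2 m1 m2 mu11 mu12 mu22 th1 th2 r kap j k : ℝ)
    (hlam1 : 0 < lam1) (hlam2 : 0 < lam2) (hm1 : 0 < m1) (hm2 : 0 < m2)
    (hmu11 : 0 < mu11) (hmu12 : 0 < mu12) (hmu22 : 0 < mu22)
    (hth1 : 0 < th1) (hth2 : 0 < th2) (hr : 0 < r) (hkap : 0 ≤ kap)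
    (hj : 0 < j) (hk : 0 < k) (hrjk : r = j / k)
    (Psi1 Psi2 : ℝ → ℝ → ℝ → ℝ → ℝ)
    (hPsi1 : ∀ p q1 q2 z, Psi1 p q1 q2 z =
      lam1 - m1*mu11 - p*(z*mu12 + (m2 - z)*mu22) - th1*q1)
    (hPsi2 : ∀ p q1 q2 z, Psi2 p q1 q2 z =
      lam2 - (1 - p)*(z*mu12 + (m2 - z)*mu22) - th2*q2)
    (dp dm : ℝ → ℝ → ℝ → ℝ)
    (hdp : ∀ q1 q2 z, dp q1 q2 z =
      j*(th2*q2 - lam2) + k*(lam1 - m1*mu11 - z*mu12 - (m2 - z)*mu22 - th1*q1))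
    (hdm : ∀ q1 q2 z, dm q1 q2 z =
      j*(z*mu12 + (m2 - z)*mu22 + th2*q2 - lam2) + k*(lam1 - m1*mu11 - th1*q1)) :
    (∀ (p q1 q2 z : ℝ),
      k*(Psi1 p q1 q2 z - r*Psi2 p q1 q2 z) = p*dp q1 q2 z + (1 - p)*dm q1 q2 z) ∧
    (∀ q1 q2 z : ℝ, dp q1 q2 z < 0 → 0 < dm q1 q2 z →
      0 < dm q1 q2 z / (dm q1 q2 z - dp q1 q2 z) ∧
      dm q1 q2 z / (dm q1 q2 z - dp q1 q2 z) < 1 ∧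
      Psi1 (dm q1 q2 z / (dm q1 q2 z - dp q1 q2 z)) q1 q2 z -
        r*Psi2 (dm q1 q2 z / (dm q1 q2 z - dp q1 q2 z)) q1 q2 z = 0 ∧
      ∀ p' : ℝ, Psi1 p' q1 q2 z - r*Psi2 p' q1 q2 z = 0 →
        p' = dm q1 q2 z / (dm q1 q2 z - dp q1 q2 z)) := by
  have hk0 : (k:ℝ) ≠ 0 := ne_of_gt hk
  have key : ∀ (p q1 q2 z : ℝ),
      k*(Psi1 p q1 q2 z - r*Psi2 p q1 q2 z) = p*dp q1 q2 z + (1 - p)*dm q1 q2 z := by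
    intro p q1 q2 z
    rw [hPsi1, hPsi2, hdp, hdm, hrjk]
    field_simp
    ring
  refine ⟨key, ?_⟩
  intro q1 q2 z hdpneg hdmpos
  set a := dp q1 q2 z with ha
  set b := dm q1 q2 z with hb
  have hD : 0 < b - a := by linarith
  have hD0 : b - a ≠ 0 := ne_of_gt hD
  have h1 : 0 < b / (b - a) := div_pos hdmpos hD
  have h2 : b / (b - a) < 1 := by
    rw [div_lt_one hD]; linarith
  have hzero : Psi1 (b / (b - a)) q1 q2 z - r*Psi2 (b / (b - a)) q1 q2 z = 0 := by
    have := key (b / (b - a)) q1 q2 z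
    have hrhs : (b / (b - a))*a + (1 - b / (b - a))*b = 0 := by
      field_simp
      ring
    rw [hrhs] at this
    exact (mul_eq_zero.mp this).resolve_left hk0
  refine ⟨h1, h2, hzero, ?_⟩
  intro p' hp'
  have h3 := key p' q1 q2 z
  rw [hp', mul_zero] at h3
  have : p' * (a - b) = -b := by linarith
  have hab : a - b ≠ 0 := by intro h; apply hD0; linarith
  field_simp
  nlinarith [this]
end

section
/- Suppose λ1 ≥ m1·μ11 and Assumption A(I) holds. (a) If q1ᵃ − κ > r·λ2/θ2 + μ12·m2/θ1, then z* = m2, π* = 1, q1* = (λ1 − m1·μ11 − μ12·m2)/θ1, q2* = λ2/θ2, q1* − r·q2* > κ, and Ψ_1(q1*, q2*, m2) = (0, 0, 0). (b) If r·q2ᵃ > q1ᵃ − κ, then z* = 0, π* = 0, q1* = (λ1 − m1·μ11)/θ1, q2* = (λ2 − m2·μ22)/θ2 ≥ 0, q1* − r·q2* < κ, and Ψ_0(q1*, q2*, 0) = (0, 0, 0). -/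
/-!
With `A = λ1 - m1 μ11`, the queue levels `q1(z) = (A - μ12 z)/θ1` and
`q2(z) = (λ2 - μ22 (m2 - z))/θ2` make the switching function `z ↦ q1(z) - r q2(z)` affine and
strictly decreasing, and `z̄` is exactly the point where it crosses `κ`. Region (a) says that it is
still above `κ` at `z = m2`, so `z̄ ≥ m2`; region (b) says that it is already below `κ` at `z = 0`,
so `z̄ < 0`. Clamping then gives `z* = m2`, resp. `z* = 0`, and the remaining claims are
evaluations. In (b), Assumption A(I) gives `q1ᵃ ≥ κ`, so `r q2ᵃ > q1ᵃ - κ` forces `q2ᵃ > 0`, i.e.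
`λ2 > μ22 m2`, which is what makes `q2* ≥ 0`.
-/

section SwitchingCurve

variable {A lam2 m2 mu12 mu22 th1 th2 r kap : ℝ}

theorem le_zbar_iff (hth1 : 0 < th1) (hth2 : 0 < th2) (hD : 0 < r*th1*mu22 + th2*mu12) (z : ℝ) :
    z ≤ (th2*A - r*th1*(lam2 - m2*mu22) - th1*th2*kap)/(r*th1*mu22 + th2*mu12) ↔
      kap ≤ (A - mu12*z)/th1 - r*((lam2 - mu22*(m2 - z))/th2) := by
  have hswitch : (A - mu12*z)/th1 - r*((lam2 - mu22*(m2 - z))/th2) - kap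
      = ((th2*A - r*th1*(lam2 - m2*mu22) - th1*th2*kap) - z*(r*th1*mu22 + th2*mu12))
          / (th1*th2) := by
    field_simp
    ring
  rw [le_div_iff₀ hD, ← sub_nonneg, ← sub_nonneg (b := kap), hswitch,
    le_div_iff₀ (by positivity), zero_mul]

theorem stationaryPoint_of_switching_gt {zb zs q1s q2s pis : ℝ}
    (hm2 : 0 < m2) (hmu12 : 0 < mu12) (hth1 : 0 < th1) (hth2 : 0 < th2)
    (hD : 0 < r*th1*mu22 + th2*mu12)
    (hzb : zb = (th2*A - r*th1*(lam2 - m2*mu22) - th1*th2*kap)/(r*th1*mu22 + th2*mu12))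
    (hzs : zs = min (max zb 0) m2)
    (hq1s : q1s = (A - mu12*zs)/th1)
    (hq2s : q2s = (lam2 - mu22*(m2 - zs))/th2)
    (hpis : pis = mu12*zs/(mu12*zs + mu22*(m2 - zs)))
    (hplus : kap < (A - mu12*m2)/th1 - r*(lam2/th2)) :
    zs = m2 ∧ pis = 1 ∧
      q1s = (A - mu12*m2)/th1 ∧ q2s = lam2/th2 ∧
      q1s - r*q2s > kap ∧
      A - 1*(m2*mu12 + (m2 - m2)*mu22) - th1*q1s = 0 ∧
      lam2 - (1 - 1)*(m2*mu12 + (m2 - m2)*mu22) - th2*q2s = 0 ∧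
      1*mu22*(m2 - m2) - (1 - 1)*mu12*m2 = 0 := by
  have hzs_eq : zs = m2 := by
    rw [hzs, min_eq_right (le_max_of_le_left _)]
    rw [hzb, le_zbar_iff hth1 hth2 hD, sub_self, mul_zero, sub_zero]
    exact hplus.le
  have hq1s_eq : q1s = (A - mu12*m2)/th1 := by rw [hq1s, hzs_eq]
  have hq2s_eq : q2s = lam2/th2 := by rw [hq2s, hzs_eq, sub_self, mul_zero, sub_zero]
  refine ⟨hzs_eq, ?_, hq1s_eq, hq2s_eq, ?_, ?_, ?_, by ring⟩
  · rw [hpis, hzs_eq, sub_self, mul_zero, add_zero, div_self (by positivity)]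
  · rw [hq1s_eq, hq2s_eq]
    exact hplus
  · rw [hq1s_eq]
    field_simp
    ring
  · rw [hq2s_eq]
    field_simp
    ring

theorem stationaryPoint_of_switching_lt {zb zs q1s q2s pis : ℝ}
    (hm2 : 0 ≤ m2) (hth1 : 0 < th1) (hth2 : 0 < th2) (hD : 0 < r*th1*mu22 + th2*mu12)
    (hzb : zb = (th2*A - r*th1*(lam2 - m2*mu22) - th1*th2*kap)/(r*th1*mu22 + th2*mu12))
    (hzs : zs = min (max zb 0) m2)
    (hq1s : q1s = (A - mu12*zs)/th1)
    (hq2s : q2s = (lam2 - mu22*(m2 - zs))/th2)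
    (hpis : pis = mu12*zs/(mu12*zs + mu22*(m2 - zs)))
    (hlam2 : mu22*m2 ≤ lam2)
    (hminus : A/th1 - r*((lam2 - mu22*m2)/th2) < kap) :
    zs = 0 ∧ pis = 0 ∧
      q1s = A/th1 ∧ q2s = (lam2 - m2*mu22)/th2 ∧ 0 ≤ q2s ∧
      q1s - r*q2s < kap ∧
      A - 0*((0:ℝ)*mu12 + (m2 - 0)*mu22) - th1*q1s = 0 ∧
      lam2 - (1 - 0)*((0:ℝ)*mu12 + (m2 - 0)*mu22) - th2*q2s = 0 ∧
      0*mu22*(m2 - 0) - (1 - 0)*mu12*(0:ℝ) = 0 := by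
  have hzb_neg : zb < 0 := by
    refine lt_of_not_ge fun h0 => hminus.not_ge ?_
    rwa [hzb, le_zbar_iff hth1 hth2 hD, mul_zero, sub_zero, sub_zero] at h0
  have hzs_eq : zs = 0 := by rw [hzs, max_eq_right hzb_neg.le, min_eq_left hm2]
  have hq1s_eq : q1s = A/th1 := by rw [hq1s, hzs_eq, mul_zero, sub_zero]
  have hq2s_eq : q2s = (lam2 - m2*mu22)/th2 := by rw [hq2s, hzs_eq, sub_zero, mul_comm]
  refine ⟨hzs_eq, by rw [hpis, hzs_eq, mul_zero, zero_div], hq1s_eq, hq2s_eq, ?_, ?_, ?_, ?_,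
    by ring⟩
  · rw [hq2s_eq]
    exact div_nonneg (by linarith) hth2.le
  · rw [hq1s_eq, hq2s_eq, mul_comm m2]
    exact hminus
  · rw [hq1s_eq]
    field_simp
    ring
  · rw [hq2s_eq]
    field_simp
    ring

end SwitchingCurve

theorem stmt_19_general (lam1 lam2 m1 m2 mu11 mu12 mu22 th1 th2 r kap : ℝ)
    (hm2 : 0 < m2) (hmu12 : 0 < mu12) (hmu22 : 0 < mu22)
    (hth1 : 0 < th1) (hth2 : 0 < th2) (hr : 0 < r)
    (zb zs q1s q2s pis q1a q2a s2a : ℝ)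
    (hzb : zb = (th2*(lam1 - m1*mu11) - r*th1*(lam2 - m2*mu22) - th1*th2*kap)/(r*th1*mu22 + th2*mu12))
    (hzs : zs = min (max zb 0) m2)
    (hq1s : q1s = (lam1 - m1*mu11 - mu12*zs)/th1)
    (hq2s : q2s = (lam2 - mu22*(m2 - zs))/th2)
    (hpis : pis = mu12*zs/(mu12*zs + mu22*(m2 - zs)))
    (hq1a : q1a = max (lam1 - mu11*m1) 0 / th1)
    (hq2a : q2a = max (lam2 - mu22*m2) 0 / th2)
    (hs2a : s2a = max (m2 - lam2/mu22) 0)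
    (hover : m1*mu11 ≤ lam1)
    (hAI : th1*(q1a - kap) ≥ mu12*s2a) :
    (q1a - kap > r*lam2/th2 + mu12*m2/th1 →
      zs = m2 ∧ pis = 1 ∧
      q1s = (lam1 - m1*mu11 - mu12*m2)/th1 ∧ q2s = lam2/th2 ∧
      q1s - r*q2s > kap ∧
      lam1 - m1*mu11 - 1*(m2*mu12 + (m2 - m2)*mu22) - th1*q1s = 0 ∧
      lam2 - (1 - 1)*(m2*mu12 + (m2 - m2)*mu22) - th2*q2s = 0 ∧
      1*mu22*(m2 - m2) - (1 - 1)*mu12*m2 = 0) ∧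
    (r*q2a > q1a - kap →
      zs = 0 ∧ pis = 0 ∧
      q1s = (lam1 - m1*mu11)/th1 ∧ q2s = (lam2 - m2*mu22)/th2 ∧ 0 ≤ q2s ∧
      q1s - r*q2s < kap ∧
      lam1 - m1*mu11 - 0*((0:ℝ)*mu12 + (m2 - 0)*mu22) - th1*q1s = 0 ∧
      lam2 - (1 - 0)*((0:ℝ)*mu12 + (m2 - 0)*mu22) - th2*q2s = 0 ∧
      0*mu22*(m2 - 0) - (1 - 0)*mu12*(0:ℝ) = 0) := by
  have hD : 0 < r*th1*mu22 + th2*mu12 := by positivity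
  have hq1a_eq : q1a = (lam1 - m1*mu11)/th1 := by
    rw [hq1a, max_eq_left (by linarith), mul_comm mu11]
  refine ⟨fun hplus => ?_, fun hminus => ?_⟩
  · refine stationaryPoint_of_switching_gt hm2 hmu12 hth1 hth2 hD hzb hzs hq1s hq2s hpis ?_
    rw [hq1a_eq] at hplus
    linarith [show (lam1 - m1*mu11 - mu12*m2)/th1 - r*(lam2/th2)
      = (lam1 - m1*mu11)/th1 - (r*lam2/th2 + mu12*m2/th1) by ring]
  · have hgap : 0 ≤ q1a - kap :=
      (mul_nonneg_iff_of_pos_left hth1).1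
        (hAI.le.trans' (mul_nonneg hmu12.le (hs2a ▸ le_max_right _ _)))
    have hlam2 : mu22*m2 < lam2 := by
      by_contra! h
      rw [hq2a, max_eq_right (by linarith), zero_div, mul_zero] at hminus
      linarith
    rw [hq1a_eq, hq2a, max_eq_left (by linarith)] at hminus
    exact stationaryPoint_of_switching_lt hm2.le hth1 hth2 hD hzb hzs hq1s hq2s hpis hlam2.le
      (by linarith)

/-- Form of the stationary point in the regions `S⁺` and `S⁻`. -/
theorem stmt_19 (lam1 lam2 m1 m2 mu11 mu12 mu22 th1 th2 r kap : ℝ)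
    (hlam1 : 0 < lam1) (hlam2 : 0 < lam2) (hm1 : 0 < m1) (hm2 : 0 < m2)
    (hmu11 : 0 < mu11) (hmu12 : 0 < mu12) (hmu22 : 0 < mu22)
    (hth1 : 0 < th1) (hth2 : 0 < th2) (hr : 0 < r) (hkap : 0 ≤ kap)
    (zb zs q1s q2s pis q1a q2a s2a : ℝ)
    (hzb : zb = (th2*(lam1 - m1*mu11) - r*th1*(lam2 - m2*mu22) - th1*th2*kap)/(r*th1*mu22 + th2*mu12))
    (hzs : zs = min (max zb 0) m2)
    (hq1s : q1s = (lam1 - m1*mu11 - mu12*zs)/th1)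
    (hq2s : q2s = (lam2 - mu22*(m2 - zs))/th2)
    (hpis : pis = mu12*zs/(mu12*zs + mu22*(m2 - zs)))
    (hq1a : q1a = max (lam1 - mu11*m1) 0 / th1)
    (hq2a : q2a = max (lam2 - mu22*m2) 0 / th2)
    (hs2a : s2a = max (m2 - lam2/mu22) 0)
    (hover : m1*mu11 ≤ lam1)
    (hAI : th1*(q1a - kap) ≥ mu12*s2a) :
    (q1a - kap > r*lam2/th2 + mu12*m2/th1 →
      zs = m2 ∧ pis = 1 ∧
      q1s = (lam1 - m1*mu11 - mu12*m2)/th1 ∧ q2s = lam2/th2 ∧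
      q1s - r*q2s > kap ∧
      lam1 - m1*mu11 - 1*(m2*mu12 + (m2 - m2)*mu22) - th1*q1s = 0 ∧
      lam2 - (1 - 1)*(m2*mu12 + (m2 - m2)*mu22) - th2*q2s = 0 ∧
      1*mu22*(m2 - m2) - (1 - 1)*mu12*m2 = 0) ∧
    (r*q2a > q1a - kap →
      zs = 0 ∧ pis = 0 ∧
      q1s = (lam1 - m1*mu11)/th1 ∧ q2s = (lam2 - m2*mu22)/th2 ∧ 0 ≤ q2s ∧
      q1s - r*q2s < kap ∧
      lam1 - m1*mu11 - 0*((0:ℝ)*mu12 + (m2 - 0)*mu22) - th1*q1s = 0 ∧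
      lam2 - (1 - 0)*((0:ℝ)*mu12 + (m2 - 0)*mu22) - th2*q2s = 0 ∧
      0*mu22*(m2 - 0) - (1 - 0)*mu12*(0:ℝ) = 0) :=
  stmt_19_general lam1 lam2 m1 m2 mu11 mu12 mu22 th1 th2 r kap hm2 hmu12 hmu22 hth1 hth2 hr zb zs
    q1s q2s pis q1a q2a s2a hzb hzs hq1s hq2s hpis hq1a hq2a hs2a hover hAI
end
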